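/- arXiv:1510.08525 — 5 statements merged into one kernel-verified Lean document; each statement's English description precedes it below -/
import Mathlib

section
/- Let P be a Euclidean affine space (a metric space that is a torsor over a real inner product space), and let A, B, C, D, M be points of P with M = midpoint A C, M = midpoint B D, and ∠ B C D = π/2. Then ∠ A D C = π/2. -/
open EuclideanGeometry

variable {V : Type*} {P : Type*} [NormedAddCommGroup V] [InnerProductSpace ℝ V]
  [MetricSpace P] [NormedAddTorsor V P]

theorem angle_ADC_eq_pi_div_two (A B C D M : P)
    (hAC : M = midpoint ℝ A C) (hBD : M = midpoint ℝ B D)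
    (hBCD : ∠ B C D = Real.pi / 2) :
    ∠ A D C = Real.pi / 2 := by
  have ha : (A -ᵥ M : V) + (C -ᵥ M) = 0 := by
    rw [hAC, left_vsub_midpoint, right_vsub_midpoint, ← neg_vsub_eq_vsub_rev A C]; module
  have hb : (B -ᵥ M : V) + (D -ᵥ M) = 0 := by
    rw [hBD, left_vsub_midpoint, right_vsub_midpoint, ← neg_vsub_eq_vsub_rev B D]; module
  have h1 : (A -ᵥ D : V) = B -ᵥ C := by
    rw [show (A -ᵥ D : V) = (A -ᵥ M) - (D -ᵥ M) from (vsub_sub_vsub_cancel_right _ _ _).symm,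
        show (B -ᵥ C : V) = (B -ᵥ M) - (C -ᵥ M) from (vsub_sub_vsub_cancel_right _ _ _).symm]
    linear_combination (norm := module) ha - hb
  have h2 : (C -ᵥ D : V) = B -ᵥ A := by
    rw [show (C -ᵥ D : V) = (C -ᵥ M) - (D -ᵥ M) from (vsub_sub_vsub_cancel_right _ _ _).symm,
        show (B -ᵥ A : V) = (B -ᵥ M) - (A -ᵥ M) from (vsub_sub_vsub_cancel_right _ _ _).symm]
    linear_combination (norm := module) ha - hb
  unfold EuclideanGeometry.angle at hBCD ⊢
  rw [h1, h2]
  have h3 : (D -ᵥ C : V) = -(B -ᵥ A) := by rw [← h2, neg_vsub_eq_vsub_rev]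
  rw [h3] at hBCD
  rw [show (B -ᵥ A : V) = -(-(B -ᵥ A)) by simp, InnerProductGeometry.angle_neg_right, hBCD]
  ring
end

section
/- Let P be a Euclidean affine space (a metric space that is a torsor over a real inner product space), and let A, B, C, D, M be points of P with M = midpoint A C, M = midpoint B D, and ∠ B C D = π/2. Then 2 * dist B M = dist A C. -/
open EuclideanGeometry

variable {V : Type*} {P : Type*} [NormedAddCommGroup V] [InnerProductSpace ℝ V]
  [MetricSpace P] [NormedAddTorsor V P]

theorem two_BM_eq_AC (A B C D M : P)
    (hAC : M = midpoint ℝ A C) (hBD : M = midpoint ℝ B D)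
    (hBCD : ∠ B C D = Real.pi / 2) :
    2 * dist B M = dist A C := by
  have hpyth := (dist_sq_eq_dist_sq_add_dist_sq_iff_angle_eq_pi_div_two B C D).2 hBCD
  have hap := dist_sq_add_dist_sq_eq_two_mul_dist_midpoint_sq_add_half_dist_sq C B D
  have hCM : dist C M ^ 2 = (dist B D / 2) ^ 2 := by
    rw [hBD]
    rw [dist_comm C B, dist_comm C D] at hap
    nlinarith [hap, hpyth]
  have hCM' : dist C M = dist B D / 2 := by
    have h1 : (0:ℝ) ≤ dist C M := dist_nonneg
    have h2 : (0:ℝ) ≤ dist B D / 2 := by positivity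
    nlinarith [hCM]
  have hBM : dist B M = dist B D / 2 := by
    rw [hBD, dist_left_midpoint (𝕜 := ℝ)]
    simp [norm_inv]
    ring
  have hAC2 : dist C M = dist A C / 2 := by
    rw [hAC, dist_right_midpoint (𝕜 := ℝ)]
    simp [Real.norm_two]
    ring
  rw [hBM, ← hCM', hAC2]
  ring
end

section
/- Let P be a Euclidean affine space (a metric space that is a torsor over a real inner product space), and let A, B, C, D, M be points of P with M = midpoint A C, M = midpoint B D, and ∠ B C D = π/2. Then dist M D = dist M C; that is, triangle DMC is isosceles. -/
open EuclideanGeometry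

variable {V : Type*} {P : Type*} [NormedAddCommGroup V] [InnerProductSpace ℝ V]
  [MetricSpace P] [NormedAddTorsor V P]

theorem tri_DMC_isosceles (A B C D M : P)
    (hAC : M = midpoint ℝ A C) (hBD : M = midpoint ℝ B D)
    (hBCD : ∠ B C D = Real.pi / 2) :
    dist M D = dist M C := by
  have hpy := (EuclideanGeometry.dist_sq_eq_dist_sq_add_dist_sq_iff_angle_eq_pi_div_two B C D).2 hBCD
  have hap := EuclideanGeometry.dist_sq_add_dist_sq_eq_two_mul_dist_midpoint_sq_add_half_dist_sq C B D
  rw [← hBD] at hap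
  have hMD : dist M D = dist B D / 2 := by
    rw [hBD, dist_midpoint_right]; simp [Real.norm_two]; ring
  rw [dist_comm C B, dist_comm C D] at hap
  have hsq : dist C M ^ 2 = (dist B D / 2) ^ 2 := by nlinarith
  have h0 : (0:ℝ) ≤ dist C M := dist_nonneg
  have h1 : (0:ℝ) ≤ dist B D / 2 := by positivity
  have : dist C M = dist B D / 2 := by
    nlinarith [sq_nonneg (dist C M - dist B D / 2), sq_nonneg (dist C M + dist B D / 2)]
  rw [hMD, dist_comm M C, this]
end

section
/- Let P be a Euclidean affine space (a metric space that is a torsor over a real inner product space), and let A, B, C, D, M be points of P with M = midpoint A C, M = midpoint B D, and ∠ B C D = π/2. Then dist M B = dist M C; that is, triangle BMC is isosceles. -/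
open EuclideanGeometry
open scoped RealInnerProductSpace

variable {V : Type*} {P : Type*} [NormedAddCommGroup V] [InnerProductSpace ℝ V]
  [MetricSpace P] [NormedAddTorsor V P]

theorem tri_BMC_isosceles (A B C D M : P)
    (hAC : M = midpoint ℝ A C) (hBD : M = midpoint ℝ B D)
    (hBCD : ∠ B C D = Real.pi / 2) :
    dist M B = dist M C := by
  have h : ⟪B -ᵥ C, D -ᵥ C⟫ = 0 :=
    (InnerProductGeometry.inner_eq_zero_iff_angle_eq_pi_div_two _ _).2 hBCD
  set x := B -ᵥ C with hx
  set y := D -ᵥ C with hy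
  have hnorm : ‖x + y‖ = ‖x - y‖ := by
    have h1 : ‖x + y‖ ^ 2 = ‖x - y‖ ^ 2 := by
      rw [norm_add_sq_real, norm_sub_sq_real, h]; ring
    nlinarith [norm_nonneg (x + y), norm_nonneg (x - y)]
  have hMB : dist M B = ‖x - y‖ / 2 := by
    rw [hBD, dist_midpoint_left (𝕜 := ℝ), dist_eq_norm_vsub V,
      show B -ᵥ D = x - y by rw [hx, hy, vsub_sub_vsub_cancel_right]]
    norm_num; ring
  have hMC : dist M C = ‖x + y‖ / 2 := by
    rw [hBD, dist_eq_norm_vsub V, midpoint_vsub, ← smul_add, norm_smul]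
    norm_num
    ring
  rw [hMB, hMC, hnorm]
end

section
/- Let P be a Euclidean affine space (a metric space that is a torsor over a real inner product space), and let A, B, C, D, M be points of P with M = midpoint A C, M = midpoint B D, and ∠ B C D = π/2. Then dist M D = dist M A; that is, triangle DMA is isosceles. -/
open EuclideanGeometry

variable {V : Type*} {P : Type*} [NormedAddCommGroup V] [InnerProductSpace ℝ V]
  [MetricSpace P] [NormedAddTorsor V P]

-- Thales: `C` lies on the sphere with diameter `BD`, whose centre is `midpoint ℝ B D`.
theorem dist_midpoint_eq_of_angle_eq_pi_div_two {B C D : P}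
    (h : ∠ B C D = Real.pi / 2) : dist (midpoint ℝ B D) C = dist (midpoint ℝ B D) D :=
  dist_center_eq_dist_center_of_mem_sphere'
    (Sphere.angle_eq_pi_div_two_iff_mem_sphere_ofDiameter.1 h)
    (Sphere.isDiameter_ofDiameter B D).right_mem

theorem tri_DMA_isosceles (A B C D M : P)
    (hAC : M = midpoint ℝ A C) (hBD : M = midpoint ℝ B D)
    (hBCD : ∠ B C D = Real.pi / 2) :
    dist M D = dist M A := by
  calc dist M D = dist M C := by
        rw [hBD]; exact (dist_midpoint_eq_of_angle_eq_pi_div_two hBCD).symm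
    _ = dist M A := by rw [hAC, dist_midpoint_left, dist_midpoint_right]
end
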